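/- The sell option value in the N-step binomial model is nondecreasing in the volatility: with u(σ) = μ/N + σ/√N and d(σ) = μ/N − σ/√N for σ > |μ|/√N, the one-step option value opt^sell(σ) = q_u(σ)·max(S_ini + u(σ) − mc, 0) + q_d(σ)·max(S_ini + d(σ) − mc, 0) (case N = 1) is nondecreasing in σ. -/

import Mathlib

/-!
Writing `x = S_ini + μ - mc`, the value at `σ` is the chord of the convex payoff `y ↦ max y 0`
through the points `x - σ` and `x + σ`, evaluated at the risk-neutral mean `S_ini - mc`, which
does not depend on `σ`. A convex function lies below its chord over a wider interval, so
widening the interval can only raise the chord at a fixed interior point.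
-/

def secantLine {𝕜 : Type*} [Field 𝕜] (f : 𝕜 → 𝕜) (a b x : 𝕜) : 𝕜 :=
  ((b - x) * f a + (x - a) * f b) / (b - a)

theorem secantLine_secantLine {𝕜 : Type*} [Field 𝕜] (f : 𝕜 → 𝕜) {a b : 𝕜} (hab : a ≠ b)
    (a' b' x : 𝕜) : secantLine (secantLine f a' b') a b x = secantLine f a' b' x := by
  have : b - a ≠ 0 := sub_ne_zero.mpr hab.symm
  unfold secantLine
  field_simp
  ring

section LinearOrderedField

variable {𝕜 : Type*} [Field 𝕜] [LinearOrder 𝕜] [IsStrictOrderedRing 𝕜]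

theorem secantLine_mono {f g : 𝕜 → 𝕜} {a b x : 𝕜} (hax : a ≤ x) (hxb : x ≤ b)
    (hfa : f a ≤ g a) (hfb : f b ≤ g b) : secantLine f a b x ≤ secantLine g a b x := by
  unfold secantLine
  gcongr ?_ / _
  · linarith
  · exact add_le_add (mul_le_mul_of_nonneg_left hfa (sub_nonneg.mpr hxb))
      (mul_le_mul_of_nonneg_left hfb (sub_nonneg.mpr hax))

theorem ConvexOn.le_secantLine {s : Set 𝕜} {f : 𝕜 → 𝕜} (hf : ConvexOn 𝕜 s f) {a b x : 𝕜}
    (ha : a ∈ s) (hb : b ∈ s) (hax : a ≤ x) (hxb : x ≤ b) (hab : a < b) :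
    f x ≤ secantLine f a b x := by
  have hba : 0 < b - a := sub_pos.mpr hab
  have key := hf.2 ha hb (div_nonneg (sub_nonneg.mpr hxb) hba.le)
    (div_nonneg (sub_nonneg.mpr hax) hba.le) (by field)
  have hx : ((b - x) / (b - a)) • a + ((x - a) / (b - a)) • b = x := by
    simp only [smul_eq_mul]; field
  rw [hx] at key
  simpa only [smul_eq_mul, secantLine, div_mul_eq_mul_div, ← add_div] using key

theorem ConvexOn.secantLine_le_secantLine {s : Set 𝕜} {f : 𝕜 → 𝕜} (hf : ConvexOn 𝕜 s f)
    {a' a b b' x : 𝕜} (ha' : a' ∈ s) (hb' : b' ∈ s) (ha'a : a' ≤ a) (hax : a ≤ x) (hxb : x ≤ b)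
    (hbb' : b ≤ b') (hab : a < b) : secantLine f a b x ≤ secantLine f a' b' x := by
  have ha'b' : a' < b' := by linarith
  calc secantLine f a b x
      ≤ secantLine (secantLine f a' b') a b x :=
        secantLine_mono hax hxb (hf.le_secantLine ha' hb' ha'a (by linarith) ha'b')
          (hf.le_secantLine ha' hb' (by linarith) hbb' ha'b')
    _ = secantLine f a' b' x := secantLine_secantLine f hab.ne a' b' x

end LinearOrderedField

theorem one_step_option_value_monotone_in_volatility (μ S_ini mc : ℝ) :
    MonotoneOn (fun σ : ℝ =>
        ((σ - μ) / (2 * σ)) * max (S_ini + μ + σ - mc) 0 +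
        ((σ + μ) / (2 * σ)) * max (S_ini + μ - σ - mc) 0)
      (Set.Ioi |μ|) := by
  have hvalue : ∀ σ : ℝ, ((σ - μ) / (2 * σ)) * max (S_ini + μ + σ - mc) 0 +
      ((σ + μ) / (2 * σ)) * max (S_ini + μ - σ - mc) 0 =
      secantLine (fun y => max y 0) (S_ini + μ - σ - mc) (S_ini + μ + σ - mc) (S_ini - mc) := by
    intro σ
    unfold secantLine
    ring
  intro σ₁ hσ₁ σ₂ _ hσ
  obtain ⟨hμ_gt, hμ_lt⟩ := abs_lt.mp (Set.mem_Ioi.mp hσ₁)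
  have hpayoff : ConvexOn ℝ Set.univ (fun y : ℝ => max y 0) :=
    (convexOn_id convex_univ).sup (convexOn_const 0 convex_univ)
  simp only [hvalue]
  exact hpayoff.secantLine_le_secantLine
    (Set.mem_univ _) (Set.mem_univ _) (by linarith) (by linarith) (by linarith) (by linarith)
    (by linarith)
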